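/- KKT stationarity and complementary slackness for a convex QP with one affine inequality constraint: if u* minimizes (u-u_d)ᵀP(u-u_d) over {u : aᵀu + b ≥ 0} with P positive definite, then there exists λ ≥ 0 such that 2P(u* - u_d) = λ a and λ(aᵀu* + b) = 0. -/

import Mathlib

/-!
At the minimiser `u*` the objective cannot decrease along any direction `v` in which `u* + t v`
stays feasible for small `t > 0`; expanding the quadratic in `t` shows that this means
`0 ≤ gᵀ v` for the gradient `g = 2 P (u* - u_d)`. If the constraint is inactive, every direction
is admissible, so `g = 0`. If it is active, the admissible directions are those with
`aᵀ v ≥ 0`, and Farkas' lemma for a single vector gives `g = λ a` with `λ ≥ 0`.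
-/

open Matrix Filter Topology

theorem nonneg_of_eventually_nonneg_quadratic {c d : ℝ}
    (h : ∀ᶠ t in 𝓝[>] (0 : ℝ), 0 ≤ d * t + c * t ^ 2) : 0 ≤ d := by
  have hlim : Tendsto (fun t : ℝ => d + c * t) (𝓝[>] 0) (𝓝 d) := by
    refine tendsto_nhdsWithin_of_tendsto_nhds ?_
    exact (by fun_prop : Continuous fun t : ℝ => d + c * t).tendsto' 0 d (by simp)
  refine ge_of_tendsto hlim ?_
  filter_upwards [h, self_mem_nhdsWithin] with t ht (htpos : 0 < t)
  nlinarith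

namespace Matrix

variable {ι R : Type*} [Fintype ι]

theorem IsSymm.dotProduct_mulVec_comm [CommSemiring R] {P : Matrix ι ι R} (hP : P.IsSymm)
    (v w : ι → R) : v ⬝ᵥ P *ᵥ w = w ⬝ᵥ P *ᵥ v := by
  rw [dotProduct_mulVec, ← mulVec_transpose, hP.eq, dotProduct_comm]

theorem IsSymm.dotProduct_mulVec_add_smul [CommRing R] {P : Matrix ι ι R} (hP : P.IsSymm)
    (w v : ι → R) (t : R) :
    (w + t • v) ⬝ᵥ P *ᵥ (w + t • v) =
      w ⬝ᵥ P *ᵥ w + 2 * (v ⬝ᵥ P *ᵥ w) * t + (v ⬝ᵥ P *ᵥ v) * t ^ 2 := by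
  simp only [mulVec_add, mulVec_smul, add_dotProduct, dotProduct_add, dotProduct_smul,
    smul_dotProduct, smul_eq_mul, hP.dotProduct_mulVec_comm w v]
  ring

theorem eq_zero_of_forall_dotProduct_nonneg [Ring R] [LinearOrder R] [IsStrictOrderedRing R]
    {g : ι → R} (h : ∀ v, 0 ≤ g ⬝ᵥ v) : g = 0 := by
  have hgg : g ⬝ᵥ g ≤ 0 := by simpa using h (-g)
  exact dotProduct_self_eq_zero.mp
    (hgg.antisymm (Finset.sum_nonneg fun i _ => mul_self_nonneg (g i)))

theorem exists_nonneg_smul_eq_of_forall_dotProduct_nonneg {𝕜 : Type*} [Field 𝕜]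
    [LinearOrder 𝕜] [IsStrictOrderedRing 𝕜] {a g : ι → 𝕜} (h : ∀ v, 0 ≤ a ⬝ᵥ v → 0 ≤ g ⬝ᵥ v) :
    ∃ lam : 𝕜, 0 ≤ lam ∧ g = lam • a := by
  rcases eq_or_ne a 0 with rfl | ha
  · exact ⟨0, le_rfl,
      by simpa using eq_zero_of_forall_dotProduct_nonneg fun v => h v (by simp)⟩
  have haa : 0 < a ⬝ᵥ a := (Finset.sum_nonneg fun i _ => mul_self_nonneg (a i)).lt_of_ne
    (Ne.symm (mt dotProduct_self_eq_zero.mp ha))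
  set lam := (g ⬝ᵥ a) / (a ⬝ᵥ a)
  -- the residual `g - lam • a` is orthogonal to `a`, so `h` applies to it and to its negative
  have har : a ⬝ᵥ (g - lam • a) = 0 := by
    rw [dotProduct_sub, dotProduct_smul, smul_eq_mul, dotProduct_comm a g,
      div_mul_cancel₀ _ haa.ne', sub_self]
  have hgr : g ⬝ᵥ (g - lam • a) = 0 := by
    have hneg := h (-(g - lam • a)) (by rw [dotProduct_neg, har, neg_zero])
    rw [dotProduct_neg] at hneg
    exact le_antisymm (neg_nonneg.mp hneg) (h _ har.ge)
  have hrr : (g - lam • a) ⬝ᵥ (g - lam • a) = 0 := by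
    rw [sub_dotProduct, hgr, smul_dotProduct, har, smul_zero, sub_zero]
  exact ⟨lam, div_nonneg (by simpa [dotProduct_comm] using h a haa.le) haa.le,
    sub_eq_zero.mp (dotProduct_self_eq_zero.mp hrr)⟩

theorem IsSymm.dotProduct_mulVec_nonneg_of_eventually_le {P : Matrix ι ι ℝ} (hP : P.IsSymm)
    {w v : ι → ℝ}
    (h : ∀ᶠ t in 𝓝[>] (0 : ℝ), w ⬝ᵥ P *ᵥ w ≤ (w + t • v) ⬝ᵥ P *ᵥ (w + t • v)) :
    0 ≤ v ⬝ᵥ P *ᵥ w := by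
  have := nonneg_of_eventually_nonneg_quadratic (c := v ⬝ᵥ P *ᵥ v)
    (d := 2 * (v ⬝ᵥ P *ᵥ w))
    (h.mono fun t ht => by rw [hP.dotProduct_mulVec_add_smul] at ht; linarith)
  linarith

end Matrix

theorem qp_kkt_general (m : ℕ) (P : Matrix (Fin m) (Fin m) ℝ) (hP : P.PosDef)
    (u_d a : Fin m → ℝ) (b : ℝ) (uStar : Fin m → ℝ)
    (hfeas : a ⬝ᵥ uStar + b ≥ 0)
    (hopt : ∀ u : Fin m → ℝ, a ⬝ᵥ u + b ≥ 0 →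
      (uStar - u_d) ⬝ᵥ P.mulVec (uStar - u_d) ≤ (u - u_d) ⬝ᵥ P.mulVec (u - u_d)) :
    ∃ lam : ℝ, 0 ≤ lam ∧ (2 : ℝ) • P.mulVec (uStar - u_d) = lam • a ∧
      lam * (a ⬝ᵥ uStar + b) = 0 := by
  have hline : ∀ (v : Fin m → ℝ) (t : ℝ),
      a ⬝ᵥ (uStar + t • v) + b = a ⬝ᵥ uStar + b + t * a ⬝ᵥ v :=
    fun v t => by rw [dotProduct_add, dotProduct_smul, smul_eq_mul]; ring
  have hstat : ∀ v, (∀ᶠ t in 𝓝[>] (0 : ℝ), a ⬝ᵥ (uStar + t • v) + b ≥ 0) →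
      0 ≤ ((2 : ℝ) • P *ᵥ (uStar - u_d)) ⬝ᵥ v := fun v hv => by
    have := (isHermitian_iff_isSymm.mp hP.isHermitian).dotProduct_mulVec_nonneg_of_eventually_le
      (hv.mono fun t ht => by simpa only [add_sub_right_comm] using hopt _ ht)
    rw [smul_dotProduct, dotProduct_comm, smul_eq_mul]
    exact mul_nonneg zero_le_two this
  rcases hfeas.eq_or_lt with hactive | hinactive
  · obtain ⟨lam, hlam, hg⟩ := exists_nonneg_smul_eq_of_forall_dotProduct_nonneg fun v hv =>
      hstat v <| eventually_nhdsWithin_of_forall fun t (ht : 0 < t) => by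
        rw [hline, ← hactive, zero_add]; exact mul_nonneg ht.le hv
    exact ⟨lam, hlam, hg, by rw [← hactive, mul_zero]⟩
  · have hnear : ∀ v : Fin m → ℝ, ∀ᶠ t in 𝓝 (0 : ℝ), a ⬝ᵥ (uStar + t • v) + b ≥ 0 := fun v =>
      (continuousAt_const.eventually_lt (by fun_prop) (by simpa using hinactive)).mono
        fun _ => le_of_lt
    have hg := eq_zero_of_forall_dotProduct_nonneg fun v =>
      hstat v (eventually_nhdsWithin_of_eventually_nhds (hnear v))
    exact ⟨0, le_rfl, by rw [hg, zero_smul], zero_mul _⟩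

/-- KKT stationarity and complementary slackness for a one-constraint convex QP. -/
theorem qp_kkt (m : ℕ) (P : Matrix (Fin m) (Fin m) ℝ) (hP : P.PosDef)
    (u_d a : Fin m → ℝ) (b : ℝ) (uStar : Fin m → ℝ)
    (hfeasne : ∃ u : Fin m → ℝ, a ⬝ᵥ u + b ≥ 0)
    (hfeas : a ⬝ᵥ uStar + b ≥ 0)
    (hopt : ∀ u : Fin m → ℝ, a ⬝ᵥ u + b ≥ 0 →
      (uStar - u_d) ⬝ᵥ P.mulVec (uStar - u_d) ≤ (u - u_d) ⬝ᵥ P.mulVec (u - u_d)) :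
    ∃ lam : ℝ, 0 ≤ lam ∧ (2 : ℝ) • P.mulVec (uStar - u_d) = lam • a ∧
      lam * (a ⬝ᵥ uStar + b) = 0 :=
  qp_kkt_general m P hP u_d a b uStar hfeas hopt
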